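/- arXiv:1307.5459 — 6 statements merged into one kernel-verified Lean document; each statement's English description precedes it below -/
import Mathlib

section
/- For any Π : Matrix (Fin m) (Fin n) ℝ, the multiset of eigenvalues of the real symmetric matrix F(Π)ᵀ * F(Π) equals the multiset {‖Π_i‖₂² : i ∈ Fin n}, where ‖Π_i‖₂ is the Euclidean norm of the i-th column of Π. Consequently, the sum of the singular values of F(Π) (the nuclear norm ‖F(Π)‖_*) equals Σ_{i} ‖Π_i‖₂. -/
/-!
Distinct diagonal blocks of `F(Π)` occupy disjoint rows, so `F(Π)ᵀ F(Π)` is the diagonal matrix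
of the squared column norms `‖Π_i‖₂²`. The eigenvalues of a diagonal Hermitian matrix are its
diagonal entries, as both multisets are the roots of its characteristic polynomial; taking square
roots gives the nuclear norm.
-/

open Matrix

/-- The block-diagonal matrix `F(Π)` whose `i`-th diagonal block is the `i`-th column of `Π`. -/
def Fmap {m n : ℕ} (P : Matrix (Fin m) (Fin n) ℝ) : Matrix (Fin n × Fin m) (Fin n) ℝ :=
  fun p i => if p.1 = i then P p.2 i else 0

open Polynomial

theorem Matrix.IsHermitian.eigenvalues_map_eq_of_eq_diagonal {𝕜 ι : Type*} [RCLike 𝕜]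
    [Fintype ι] [DecidableEq ι] {A : Matrix ι ι 𝕜} (hA : A.IsHermitian) {d : ι → ℝ}
    (h : A = diagonal fun i => (d i : 𝕜)) :
    Finset.univ.val.map hA.eigenvalues = Finset.univ.val.map d := by
  apply Multiset.map_injective (RCLike.ofReal_injective (K := 𝕜))
  rw [Multiset.map_map, Multiset.map_map, ← hA.roots_charpoly_eq_eigenvalues, h,
    charpoly_diagonal, roots_prod _ _ (Finset.prod_ne_zero_iff.mpr fun i _ => X_sub_C_ne_zero _)]
  simp

theorem Fmap_transpose_mul_self {m n : ℕ} (P : Matrix (Fin m) (Fin n) ℝ) :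
    (Fmap P)ᵀ * Fmap P = diagonal fun i => ∑ j, P j i ^ 2 := by
  ext i i'
  simp only [mul_apply, transpose_apply, Fmap, diagonal_apply, Fintype.sum_prod_type]
  rcases eq_or_ne i i' with rfl | h
  · simp [sq]
  · simp [h, h.symm]

theorem stmt_3 (m n : ℕ) (P : Matrix (Fin m) (Fin n) ℝ)
    (hH : ((Fmap P)ᵀ * Fmap P).IsHermitian) :
    Finset.univ.val.map hH.eigenvalues
        = Finset.univ.val.map (fun i : Fin n => Real.sqrt (∑ j, (P j i) ^ 2) ^ 2) ∧
    ∑ i, Real.sqrt (hH.eigenvalues i) = ∑ i : Fin n, Real.sqrt (∑ j, (P j i) ^ 2) := by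
  have hsq (i : Fin n) : Real.sqrt (∑ j, P j i ^ 2) ^ 2 = ∑ j, P j i ^ 2 :=
    Real.sq_sqrt (Finset.sum_nonneg fun j _ => sq_nonneg _)
  have heig := hH.eigenvalues_map_eq_of_eq_diagonal (d := fun i => ∑ j, P j i ^ 2)
    (Fmap_transpose_mul_self P)
  refine ⟨by simpa only [hsq] using heig, ?_⟩
  have hsqrt := congrArg (fun s => (s.map Real.sqrt).sum) heig
  simpa only [Multiset.map_map, Finset.sum_map_val, Function.comp_def] using hsqrt
end

section
/- Let p₀ : Fin m → ℝ be nonzero with nonnegative entries, and define φ(Π) = (1 / ‖p₀‖₂) · Σ_{i ∈ Fin n} ‖Π_i‖₂ for Π : Matrix (Fin m) (Fin n) ℝ. Then φ is a convex function on the space of m × n real matrices, and for every Π in the feasible set S(p₀) = {Π : Π j i ≥ 0 for all j, i, and Σ_i Π j i = p₀ j for all j}, one has φ(Π) ≤ rank(F(Π)). -/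
/-!
`φ` is `‖p₀‖⁻¹` times the `ℓ¹`-sum of the Euclidean norms of the columns, i.e. a multiple of a
norm composed with a linear map, hence convex. For `Π ∈ S(p₀)`, nonnegativity and the row sums
give `0 ≤ Π j i ≤ p₀ j`, so every column has norm at most `‖p₀‖`, and `φ(Π)` is at most the number
of nonzero columns. Choosing a nonzero entry `(r i, i)` in each such column, the rows `(i, r i)`
and columns `i` of `F(Π)` form an invertible diagonal submatrix, so that number is at most
`rank F(Π)`.
-/

open Matrix

open Finset

section ColumnNorms

variable {m n : Type*} [Fintype m] [Fintype n]

def colsL21 : Matrix m n ℝ →ₗ[ℝ] PiLp 1 (fun _ : n => EuclideanSpace ℝ m) where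
  toFun P := WithLp.toLp 1 fun i => WithLp.toLp 2 fun j => P j i
  map_add' _ _ := rfl
  map_smul' _ _ := rfl

lemma norm_colsL21 (P : Matrix m n ℝ) : ‖colsL21 P‖ = ∑ i, √(∑ j, P j i ^ 2) := by
  simp only [PiLp.norm_eq_of_L1, EuclideanSpace.norm_eq, Real.norm_eq_abs, sq_abs]
  rfl

lemma convexOn_sum_sqrt_sum_sq_col :
    ConvexOn ℝ Set.univ fun P : Matrix m n ℝ => ∑ i, √(∑ j, P j i ^ 2) := by
  simpa only [Function.comp_def, norm_colsL21, Set.preimage_univ] using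
    (convexOn_norm convex_univ).comp_linearMap (colsL21 (m := m) (n := n))

end ColumnNorms

lemma sqrt_sum_sq_le_sqrt_sum_sq {ι : Type*} [Fintype ι] {x y : ι → ℝ}
    (hx : ∀ j, 0 ≤ x j) (hxy : ∀ j, x j ≤ y j) : √(∑ j, x j ^ 2) ≤ √(∑ j, y j ^ 2) :=
  Real.sqrt_le_sqrt <| sum_le_sum fun j _ => pow_le_pow_left₀ (hx j) (hxy j) 2

lemma sum_le_card_mul_of_eq_zero_of_notMem {ι : Type*} [Fintype ι] {f : ι → ℝ} {c : ℝ}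
    {s : Finset ι} (hle : ∀ i ∈ s, f i ≤ c) (hzero : ∀ i ∉ s, f i = 0) :
    ∑ i, f i ≤ #s * c := by
  rw [← sum_subset (subset_univ s) fun i _ hi => hzero i hi, ← nsmul_eq_mul]
  exact sum_le_card_nsmul s f c hle

lemma card_nonzero_cols_le_rank_Fmap {m n : ℕ} (P : Matrix (Fin m) (Fin n) ℝ) :
    #{i | ∃ j, P j i ≠ 0} ≤ (Fmap P).rank := by
  classical
  set s : Finset (Fin n) := {i | ∃ j, P j i ≠ 0}
  have hs : ∀ i : s, ∃ j, P j i ≠ 0 := fun i => (mem_filter.mp i.2).2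
  choose r hr using hs
  have hdiag : (Fmap P).submatrix (fun i : s => ((i : Fin n), r i)) (↑) =
      diagonal fun i : s => P (r i) i := by
    ext i k
    by_cases hik : i = k
    · subst hik; simp [Fmap]
    · simp [Fmap, hik, Subtype.val_injective.ne hik]
  calc #s = Fintype.card s := (Fintype.card_coe s).symm
    _ = (diagonal fun i : s => P (r i) i).rank := by
        rw [rank_diagonal, Fintype.card_congr (Equiv.subtypeUnivEquiv hr)]
    _ ≤ (Fmap P).rank := hdiag ▸ rank_submatrix_le _ _ _

theorem stmt_6_general (m n : ℕ) (p₀ : Fin m → ℝ)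
    (φ : Matrix (Fin m) (Fin n) ℝ → ℝ)
    (hφ : φ = fun P => (1 / Real.sqrt (∑ j, (p₀ j) ^ 2)) *
      ∑ i : Fin n, Real.sqrt (∑ j, (P j i) ^ 2)) :
    ConvexOn ℝ Set.univ φ ∧
    ∀ P : Matrix (Fin m) (Fin n) ℝ, (∀ j i, 0 ≤ P j i) → (∀ j, ∑ i, P j i = p₀ j) →
      φ P ≤ ((Fmap P).rank : ℝ) := by
  subst hφ
  set c := √(∑ j, p₀ j ^ 2)
  refine ⟨convexOn_sum_sqrt_sum_sq_col.smul (by positivity : 0 ≤ 1 / c), fun P hP hrow => ?_⟩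
  have hcol (i : Fin n) : √(∑ j, P j i ^ 2) ≤ c :=
    sqrt_sum_sq_le_sqrt_sum_sq (hP · i) fun j =>
      hrow j ▸ single_le_sum (fun i' _ => hP j i') (mem_univ i)
  have hsum := sum_le_card_mul_of_eq_zero_of_notMem (s := {i | ∃ j, P j i ≠ 0})
    (fun i _ => hcol i) fun i hi => by simp_all
  calc 1 / c * ∑ i, √(∑ j, P j i ^ 2)
      ≤ 1 / c * (#{i | ∃ j, P j i ≠ 0} * c) := by gcongr
    -- `c / c ≤ 1` also covers `c = 0`, where `1 / c = 0`
    _ = #{i | ∃ j, P j i ≠ 0} * (c / c) := by ring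
    _ ≤ #{i | ∃ j, P j i ≠ 0} := mul_le_of_le_one_right (by positivity) (div_self_le_one c)
    _ ≤ (Fmap P).rank := by exact_mod_cast card_nonzero_cols_le_rank_Fmap P

theorem stmt_6 (m n : ℕ) (p₀ : Fin m → ℝ) (hp₀ : ∀ j, 0 ≤ p₀ j) (hp₀ne : p₀ ≠ 0)
    (φ : Matrix (Fin m) (Fin n) ℝ → ℝ)
    (hφ : φ = fun P => (1 / Real.sqrt (∑ j, (p₀ j) ^ 2)) *
      ∑ i : Fin n, Real.sqrt (∑ j, (P j i) ^ 2)) :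
    ConvexOn ℝ Set.univ φ ∧
    ∀ P : Matrix (Fin m) (Fin n) ℝ, (∀ j i, 0 ≤ P j i) → (∀ j, ∑ i, P j i = p₀ j) →
      φ P ≤ ((Fmap P).rank : ℝ) :=
  stmt_6_general m n p₀ φ hφ
end

section
/- Let p₀ : Fin m → ℝ and let Π : Matrix (Fin m) (Fin n) ℝ satisfy Π j i ≥ 0 for all j, i and Σ_i Π j i = p₀ j for all j. Then the minimum of Σ_{i} y i over all y : Fin n → ℝ with y i ∈ {0, 1} for all i and Π j i ≤ p₀ j * y i for all j, i, equals card(Πᵀ𝟙), the number of nonzero column sums of Π; the minimum is attained by the indicator vector of the nonzero columns of Π. -/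
/-!
With nonnegative entries, a column of `Π` vanishes exactly when its sum does. A feasible
`0/1`-vector `y` must therefore have `y i = 1` on every column with nonzero sum, since
`y i = 0` forces the whole column to vanish; this bounds `∑ i, y i` below by the number of such
columns. Conversely, the indicator of the nonzero columns is feasible, because each entry is at
most its row sum `p₀ j`.
-/

open Finset

variable {ι κ R : Type*} [Semiring R] [PartialOrder R] {P : Matrix κ ι R}

lemma eq_one_of_colSum_ne_zero [Fintype κ] {p : κ → R} {y : ι → R} {i : ι}
    (hP : ∀ j i, 0 ≤ P j i) (hy : y i = 0 ∨ y i = 1) (hcover : ∀ j, P j i ≤ p j * y i)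
    (hi : ∑ j, P j i ≠ 0) : y i = 1 := by
  refine hy.resolve_left fun h0 => hi (sum_eq_zero fun j _ => ?_)
  exact le_antisymm (by simpa [h0] using hcover j) (hP j i)

section OrderedSemiring

variable [IsOrderedRing R]

lemma col_ne_zero_iff_colSum_ne_zero [Fintype κ] (hP : ∀ j i, 0 ≤ P j i) (i : ι) :
    (fun j => P j i) ≠ 0 ↔ ∑ j, P j i ≠ 0 :=
  (Fintype.sum_eq_zero_iff_of_nonneg fun j => hP j i).not.symm

lemma card_le_sum_of_zero_or_one [Fintype ι] {s : Finset ι} {y : ι → R}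
    (hy : ∀ i, y i = 0 ∨ y i = 1) (hs : ∀ i ∈ s, y i = 1) : (#s : R) ≤ ∑ i, y i :=
  calc (#s : R) = ∑ i ∈ s, y i := by simp [sum_congr rfl hs]
    _ ≤ ∑ i, y i := sum_le_sum_of_subset_of_nonneg (subset_univ s) fun i _ _ =>
      (hy i).elim (·.ge) fun h => h ▸ zero_le_one

lemma card_colSum_ne_zero_le_sum [Fintype ι] [Fintype κ] [DecidableEq R] {p : κ → R}
    {y : ι → R} (hP : ∀ j i, 0 ≤ P j i) (hy : ∀ i, y i = 0 ∨ y i = 1)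
    (hcover : ∀ j i, P j i ≤ p j * y i) :
    (#{i | ∑ j, P j i ≠ 0} : R) ≤ ∑ i, y i :=
  card_le_sum_of_zero_or_one hy fun i hi =>
    eq_one_of_colSum_ne_zero hP (hy i) (hcover · i) (mem_filter.1 hi).2

lemma le_rowSum_mul_ite [Fintype ι] [Fintype κ] [DecidableEq R] (hP : ∀ j i, 0 ≤ P j i)
    (j : κ) (i : ι) :
    P j i ≤ (∑ i', P j i') * if (fun j' => P j' i) ≠ 0 then 1 else 0 := by
  split_ifs with h
  · simpa using single_le_sum (fun i' _ => hP j i') (mem_univ i)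
  · simp [congrFun (not_not.1 h) j]

lemma sum_ite_col_ne_zero [Fintype ι] [Fintype κ] [DecidableEq R] (hP : ∀ j i, 0 ≤ P j i) :
    (∑ i, if (fun j => P j i) ≠ 0 then (1 : R) else 0) = #{i | ∑ j, P j i ≠ 0} := by
  rw [← sum_boole]
  exact sum_congr rfl fun i _ => if_congr (col_ne_zero_iff_colSum_ne_zero hP i) rfl rfl

end OrderedSemiring

open Classical in
theorem stmt_8 (m n : ℕ) (p₀ : Fin m → ℝ) (P : Matrix (Fin m) (Fin n) ℝ)
    (hP : ∀ j i, 0 ≤ P j i) (hrow : ∀ j, ∑ i, P j i = p₀ j) :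
    IsLeast {s : ℝ | ∃ y : Fin n → ℝ, (∀ i, y i = 0 ∨ y i = 1) ∧
        (∀ j i, P j i ≤ p₀ j * y i) ∧ s = ∑ i, y i}
      ((Finset.univ.filter (fun i : Fin n => ∑ j, P j i ≠ 0)).card : ℝ) ∧
    ((∀ j i, P j i ≤ p₀ j * (if (fun j' => P j' i) ≠ 0 then (1 : ℝ) else 0)) ∧
      (∑ i : Fin n, (if (fun j' => P j' i) ≠ 0 then (1 : ℝ) else 0))
        = ((Finset.univ.filter (fun i : Fin n => ∑ j, P j i ≠ 0)).card : ℝ)) := by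
  have hfeasible : ∀ j i, P j i ≤ p₀ j * (if (fun j' => P j' i) ≠ 0 then (1 : ℝ) else 0) :=
    fun j i => hrow j ▸ le_rowSum_mul_ite hP j i
  have hsum := sum_ite_col_ne_zero hP
  refine ⟨⟨⟨_, fun i => (ite_eq_or_eq _ _ _).symm, hfeasible, hsum.symm⟩, ?_⟩, hfeasible, hsum⟩
  rintro s ⟨y, hy, hcover, rfl⟩
  exact card_colSum_ne_zero_le_sum hP hy hcover
end

section
/- Let p₀ : Fin m → ℝ have nonnegative entries, let C : Matrix (Fin m) (Fin n) ℝ, and let λ ≥ 0. Then the infimum over Π ∈ S(p₀) of trace(Cᵀ * Π) + λ · card(Πᵀ𝟙) equals the infimum, over all pairs (Π, y) with Π ∈ S(p₀), y : Fin n → ℝ, y i ∈ {0, 1} for all i, and Π j i ≤ p₀ j * y i for all j, i, of trace(Cᵀ * Π) + λ · Σ_i y i. -/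
open Matrix

/-- The feasible set `S(p₀)`: entrywise-nonnegative matrices with row sums `p₀`. -/
def feasibleSet {m n : ℕ} (p₀ : Fin m → ℝ) : Set (Matrix (Fin m) (Fin n) ℝ) :=
  {P | (∀ j i, 0 ≤ P j i) ∧ ∀ j, ∑ i, P j i = p₀ j}

/-!
Both problems have the same objective on a feasible `Π` except for the sparsity term. Given `Π`,
the indicator `y` of its nonzero columns is admissible and gives `∑ i, y i = card(Πᵀ𝟙)`; conversely
any admissible `y` must be `1` on every nonzero column (as `Π j i ≤ p₀ j * 0 = 0` otherwise), so
`card(Πᵀ𝟙) ≤ ∑ i, y i`. Hence each value of either problem is dominated by a value of the other,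
and the two infima agree (also when the sets are empty or unbounded below).
-/

variable {m n : ℕ}

lemma apply_le_of_mem_feasibleSet {p₀ : Fin m → ℝ} {P : Matrix (Fin m) (Fin n) ℝ}
    (hP : P ∈ feasibleSet p₀) (j : Fin m) (i : Fin n) : P j i ≤ p₀ j :=
  hP.2 j ▸ Finset.single_le_sum (fun i' _ => hP.1 j i') (Finset.mem_univ i)

lemma apply_le_mul_ite_of_mem_feasibleSet {p₀ : Fin m → ℝ} {P : Matrix (Fin m) (Fin n) ℝ}
    (hP : P ∈ feasibleSet p₀) (j : Fin m) (i : Fin n) :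
    P j i ≤ p₀ j * if ∑ j', P j' i ≠ 0 then 1 else 0 := by
  split_ifs with hcol
  · simpa using apply_le_of_mem_feasibleSet hP j i
  · have hzero := (Finset.sum_eq_zero_iff_of_nonneg fun j' _ => hP.1 j' i).mp (not_not.mp hcol)
    simp [hzero j (Finset.mem_univ j)]

lemma card_filter_colSum_ne_zero_le_sum {p₀ : Fin m → ℝ} {P : Matrix (Fin m) (Fin n) ℝ}
    (hP : ∀ j i, 0 ≤ P j i) {y : Fin n → ℝ} (hy : ∀ i, y i = 0 ∨ y i = 1)
    (hPy : ∀ j i, P j i ≤ p₀ j * y i) :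
    ((Finset.univ.filter fun i => ∑ j, P j i ≠ 0).card : ℝ) ≤ ∑ i, y i := by
  rw [Finset.natCast_card_filter]
  refine Finset.sum_le_sum fun i _ => ?_
  rcases hy i with hyi | hyi
  · have hcol : ∑ j, P j i = 0 :=
      Finset.sum_eq_zero fun j _ => le_antisymm (by simpa [hyi] using hPy j i) (hP j i)
    simp [hcol, hyi]
  · split_ifs <;> simp [hyi]

theorem stmt_9_general (m n : ℕ) (p₀ : Fin m → ℝ)
    (C : Matrix (Fin m) (Fin n) ℝ) (lam : ℝ) (hlam : 0 ≤ lam) :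
    sInf {v : ℝ | ∃ P ∈ feasibleSet (n := n) p₀,
        v = Matrix.trace (Cᵀ * P) +
          lam * ((Finset.univ.filter (fun i : Fin n => ∑ j, P j i ≠ 0)).card : ℝ)}
      = sInf {v : ℝ | ∃ P ∈ feasibleSet (n := n) p₀, ∃ y : Fin n → ℝ,
          (∀ i, y i = 0 ∨ y i = 1) ∧ (∀ j i, P j i ≤ p₀ j * y i) ∧
          v = Matrix.trace (Cᵀ * P) + lam * ∑ i, y i} := by
  apply csInf_eq_csInf_of_forall_exists_le
  · rintro _ ⟨P, hP, rfl⟩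
    refine ⟨_, ⟨P, hP, fun i => if ∑ j, P j i ≠ 0 then 1 else 0, fun i => ?_,
      apply_le_mul_ite_of_mem_feasibleSet hP, rfl⟩, ?_⟩
    · dsimp only; split_ifs <;> simp
    · rw [Finset.sum_boole]
  · rintro _ ⟨P, hP, y, hy, hPy, rfl⟩
    refine ⟨_, ⟨P, hP, rfl⟩, ?_⟩
    gcongr
    exact card_filter_colSum_ne_zero_le_sum hP.1 hy hPy

theorem stmt_9 (m n : ℕ) (p₀ : Fin m → ℝ) (hp₀ : ∀ j, 0 ≤ p₀ j)
    (C : Matrix (Fin m) (Fin n) ℝ) (lam : ℝ) (hlam : 0 ≤ lam) :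
    sInf {v : ℝ | ∃ P ∈ feasibleSet (n := n) p₀,
        v = Matrix.trace (Cᵀ * P) +
          lam * ((Finset.univ.filter (fun i : Fin n => ∑ j, P j i ≠ 0)).card : ℝ)}
      = sInf {v : ℝ | ∃ P ∈ feasibleSet (n := n) p₀, ∃ y : Fin n → ℝ,
          (∀ i, y i = 0 ∨ y i = 1) ∧ (∀ j i, P j i ≤ p₀ j * y i) ∧
          v = Matrix.trace (Cᵀ * P) + lam * ∑ i, y i} :=
  stmt_9_general m n p₀ C lam hlam
end

section
/- Let p₀ : Fin m → ℝ be a probability vector (nonnegative entries summing to 1), let C : Matrix (Fin m) (Fin n) ℝ, and let λ ≥ 0. Then the infimum over Π ∈ S(p₀) of trace(Cᵀ * Π) + λ / ‖Πᵀ𝟙‖_∞ is less than or equal to the infimum over Π ∈ S(p₀) of trace(Cᵀ * Π) + λ · card(Πᵀ𝟙). (Note that for Π ∈ S(p₀), the column-sum vector Πᵀ𝟙 is a probability vector, so ‖Πᵀ𝟙‖_∞ > 0.) -/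
/-! The column sums `s` of a feasible plan add up to `1`, so on the support of `s`,
`1 = ∑ sᵢ ≤ card(s) · ‖s‖_∞`; hence `λ / ‖s‖_∞ ≤ λ · card(s)` plan by plan. Both objectives
are minimised over the same feasible set, and the left one is bounded below (by the cost term,
since `0 ≤ Π j i ≤ p₀ j`), so the pointwise inequality passes to the infima. -/

open Matrix

theorem sInf_le_sInf_of_forall_le {ι α : Type*} [ConditionallyCompleteLattice α] {S : Set ι}
    {f g : ι → α} (hf : BddBelow (f '' S)) (hfg : ∀ x ∈ S, f x ≤ g x) :
    sInf {v : α | ∃ x ∈ S, v = f x} ≤ sInf {v : α | ∃ x ∈ S, v = g x} := by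
  rcases S.eq_empty_or_nonempty with rfl | ⟨x₀, hx₀⟩
  · simp
  have hbdd : BddBelow {v : α | ∃ x ∈ S, v = f x} := by
    obtain ⟨b, hb⟩ := hf
    exact ⟨b, by rintro _ ⟨y, hy, rfl⟩; exact hb ⟨y, hy, rfl⟩⟩
  refine le_csInf ⟨g x₀, x₀, hx₀, rfl⟩ ?_
  rintro _ ⟨x, hx, rfl⟩
  exact (csInf_le hbdd ⟨x, hx, rfl⟩).trans (hfg x hx)

theorem one_le_card_support_mul_iSup_abs {ι : Type*} [Fintype ι] {s : ι → ℝ}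
    (hs : ∑ i, s i = 1) :
    1 ≤ ((Finset.univ.filter (fun i => s i ≠ 0)).card : ℝ) * ⨆ i, |s i| := by
  have hle : ∀ i, s i ≤ ⨆ i, |s i| := fun i =>
    (le_abs_self _).trans (le_ciSup (Set.finite_range fun i => |s i|).bddAbove i)
  calc (1 : ℝ) = ∑ i ∈ Finset.univ.filter (fun i => s i ≠ 0), s i := by
        rw [Finset.sum_filter_ne_zero, hs]
    _ ≤ _ := by
        simpa only [nsmul_eq_mul] using Finset.sum_le_card_nsmul _ _ _ fun i _ => hle i

theorem div_le_mul_of_one_le_mul {a k M : ℝ} (ha : 0 ≤ a) (hk : 0 ≤ k) (h : 1 ≤ k * M) :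
    a / M ≤ a * k := by
  have hM : 0 < M := by
    by_contra! hM
    linarith [mul_nonpos_of_nonneg_of_nonpos hk hM]
  rw [div_le_iff₀ hM]
  nlinarith

theorem trace_transpose_mul_eq_sum {m n : ℕ} (C P : Matrix (Fin m) (Fin n) ℝ) :
    trace (Cᵀ * P) = ∑ j, ∑ i, C j i * P j i := by
  simp only [trace, diag, mul_apply, transpose_apply]
  exact Finset.sum_comm

section feasibleSet

variable {m n : ℕ} {p₀ : Fin m → ℝ} {P : Matrix (Fin m) (Fin n) ℝ}

theorem le_of_mem_feasibleSet (hP : P ∈ feasibleSet p₀) (j : Fin m) (i : Fin n) :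
    P j i ≤ p₀ j :=
  hP.2 j ▸ Finset.single_le_sum (fun i' _ => hP.1 j i') (Finset.mem_univ i)

theorem sum_colSums_of_mem_feasibleSet (hsum : ∑ j, p₀ j = 1) (hP : P ∈ feasibleSet p₀) :
    ∑ i, ∑ j, P j i = 1 := by
  rw [Finset.sum_comm, ← hsum]
  exact Finset.sum_congr rfl fun j _ => hP.2 j

theorem neg_sum_abs_mul_le_trace (C : Matrix (Fin m) (Fin n) ℝ) (hP : P ∈ feasibleSet p₀) :
    -∑ j, ∑ i, |C j i| * p₀ j ≤ trace (Cᵀ * P) := by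
  rw [trace_transpose_mul_eq_sum, ← Finset.sum_neg_distrib]
  refine Finset.sum_le_sum fun j _ => ?_
  rw [← Finset.sum_neg_distrib]
  refine Finset.sum_le_sum fun i _ => ?_
  calc -(|C j i| * p₀ j) ≤ -(|C j i| * P j i) :=
        neg_le_neg <| mul_le_mul_of_nonneg_left (le_of_mem_feasibleSet hP j i) (abs_nonneg _)
    _ = -|C j i| * P j i := by ring
    _ ≤ C j i * P j i := mul_le_mul_of_nonneg_right (neg_abs_le _) (hP.1 j i)

end feasibleSet

theorem stmt_11_general (m n : ℕ) (p₀ : Fin m → ℝ) (hsum : ∑ j, p₀ j = 1)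
    (C : Matrix (Fin m) (Fin n) ℝ) (lam : ℝ) (hlam : 0 ≤ lam) :
    sInf {v : ℝ | ∃ P ∈ feasibleSet (n := n) p₀,
        v = Matrix.trace (Cᵀ * P) + lam / (⨆ i : Fin n, |∑ j, P j i|)}
      ≤ sInf {v : ℝ | ∃ P ∈ feasibleSet (n := n) p₀,
        v = Matrix.trace (Cᵀ * P) +
          lam * ((Finset.univ.filter (fun i : Fin n => ∑ j, P j i ≠ 0)).card : ℝ)} := by
  refine sInf_le_sInf_of_forall_le ?_ fun P hP => ?_
  · refine ⟨-∑ j, ∑ i, |C j i| * p₀ j, ?_⟩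
    rintro _ ⟨P, hP, rfl⟩
    have hreg : 0 ≤ lam / ⨆ i, |∑ j, P j i| :=
      div_nonneg hlam (Real.iSup_nonneg fun _ => abs_nonneg _)
    linarith [neg_sum_abs_mul_le_trace C hP]
  · gcongr
    exact div_le_mul_of_one_le_mul hlam (Nat.cast_nonneg _)
      (one_le_card_support_mul_iSup_abs (sum_colSums_of_mem_feasibleSet hsum hP))

theorem stmt_11 (m n : ℕ) (p₀ : Fin m → ℝ) (hp₀ : ∀ j, 0 ≤ p₀ j) (hsum : ∑ j, p₀ j = 1)
    (C : Matrix (Fin m) (Fin n) ℝ) (lam : ℝ) (hlam : 0 ≤ lam) :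
    sInf {v : ℝ | ∃ P ∈ feasibleSet (n := n) p₀,
        v = Matrix.trace (Cᵀ * P) + lam / (⨆ i : Fin n, |∑ j, P j i|)}
      ≤ sInf {v : ℝ | ∃ P ∈ feasibleSet (n := n) p₀,
        v = Matrix.trace (Cᵀ * P) +
          lam * ((Finset.univ.filter (fun i : Fin n => ∑ j, P j i ≠ 0)).card : ℝ)} :=
  stmt_11_general m n p₀ hsum C lam hlam
end

section
/- Let p₀ : Fin m → ℝ be a probability vector (nonnegative entries summing to 1) with m ≥ 1 and n ≥ 1, let C : Matrix (Fin m) (Fin n) ℝ, and let λ > 0. Then the infimum over Π ∈ S(p₀) of trace(Cᵀ * Π) + λ / ‖Πᵀ𝟙‖_∞ equals the minimum over i ∈ Fin n of the infimum, over Π ∈ S(p₀) with (Πᵀ𝟙) i > 0, of trace(Cᵀ * Π) + λ / (Πᵀ𝟙) i. -/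
/-!
For a feasible `P` the column sums are nonnegative and add up to `1`, so `‖Pᵀ𝟙‖_∞` is the
largest column sum, attained at some column `i₀` where it is positive. Hence every value of
the left-hand objective is a value of the `i₀`-th objective, and every value of the `i`-th
objective dominates the left-hand value of the same `P` (as `λ > 0`). Two families of sets
related in this way have the same infimum, once the left one is bounded below (the cost
is at least `-∑ |C j i|`) and the right ones are nonempty (put all the mass in column `i`).
-/

open Matrix

theorem csInf_eq_iInf_csInf_of_forall_exists_le {α ι : Type*} [ConditionallyCompleteLattice α]
    [Nonempty ι] {B : Set α} {A : ι → Set α} (hB : BddBelow B) (hA : ∀ i, (A i).Nonempty)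
    (hAB : ∀ i, ∀ a ∈ A i, ∃ b ∈ B, b ≤ a) (hBA : ∀ b ∈ B, ∃ i, b ∈ A i) :
    sInf B = ⨅ i, sInf (A i) := by
  have hB_lb : ∀ i, sInf B ∈ lowerBounds (A i) := fun i a ha => by
    obtain ⟨b, hb, hba⟩ := hAB i a ha
    exact (csInf_le hB hb).trans hba
  have hB_le : ∀ i, sInf B ≤ sInf (A i) := fun i => le_csInf (hA i) (hB_lb i)
  obtain ⟨i₁⟩ := ‹Nonempty ι›
  obtain ⟨a₁, ha₁⟩ := hA i₁
  obtain ⟨b₁, hb₁, -⟩ := hAB i₁ a₁ ha₁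
  refine le_antisymm (le_ciInf hB_le) (le_csInf ⟨b₁, hb₁⟩ fun b hb => ?_)
  obtain ⟨i, hi⟩ := hBA b hb
  have hbdd : BddBelow (Set.range fun i => sInf (A i)) := ⟨sInf B, Set.forall_mem_range.2 hB_le⟩
  exact (ciInf_le hbdd i).trans (csInf_le ⟨sInf B, hB_lb i⟩ hi)

namespace feasibleSet

variable {m n : ℕ} {p₀ : Fin m → ℝ} {P : Matrix (Fin m) (Fin n) ℝ}

theorem sum_col_nonneg (hP : P ∈ feasibleSet p₀) (i : Fin n) : 0 ≤ ∑ j, P j i :=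
  Finset.sum_nonneg fun j _ => hP.1 j i

theorem sum_sum_eq_one (hP : P ∈ feasibleSet p₀) (hsum : ∑ j, p₀ j = 1) :
    ∑ j, ∑ i, P j i = 1 := by
  simp only [hP.2, hsum]

theorem entry_le_one (hP : P ∈ feasibleSet p₀) (hsum : ∑ j, p₀ j = 1) (j : Fin m) (i : Fin n) :
    P j i ≤ 1 :=
  calc P j i ≤ ∑ i, P j i := Finset.single_le_sum (fun i _ => hP.1 j i) (Finset.mem_univ i)
    _ ≤ ∑ j, ∑ i, P j i :=
      Finset.single_le_sum (f := fun j => ∑ i, P j i)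
        (fun j _ => Finset.sum_nonneg fun i _ => hP.1 j i) (Finset.mem_univ j)
    _ = 1 := sum_sum_eq_one hP hsum

theorem neg_sum_abs_le_trace (hP : P ∈ feasibleSet p₀) (hsum : ∑ j, p₀ j = 1)
    (C : Matrix (Fin m) (Fin n) ℝ) : -∑ i, ∑ j, |C j i| ≤ trace (Cᵀ * P) := by
  simp only [trace, diag, mul_apply, transpose_apply, ← Finset.sum_neg_distrib]
  gcongr with i _ j _
  have h0 := hP.1 j i
  have h1 := entry_le_one hP hsum j i
  nlinarith [neg_abs_le (C j i), abs_nonneg (C j i)]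

theorem exists_iSup_abs_sum_col_eq (hP : P ∈ feasibleSet p₀) (hsum : ∑ j, p₀ j = 1) :
    ∃ i₀, 0 < ∑ j, P j i₀ ∧ (⨆ i, |∑ j, P j i|) = ∑ j, P j i₀ ∧
      ∀ i, ∑ j, P j i ≤ ∑ j, P j i₀ := by
  have htotal : ∑ i, ∑ j, P j i = 1 := by rw [Finset.sum_comm, sum_sum_eq_one hP hsum]
  obtain ⟨i, -, -⟩ := Finset.exists_ne_zero_of_sum_ne_zero (htotal ▸ one_ne_zero)
  have : Nonempty (Fin n) := ⟨i⟩
  obtain ⟨i₀, hmax⟩ := Finite.exists_max fun i => ∑ j, P j i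
  have hpos : 0 < ∑ j, P j i₀ := by
    by_contra! h
    linarith [Finset.sum_nonpos fun i (_ : i ∈ Finset.univ) => (hmax i).trans h]
  refine ⟨i₀, hpos, ?_, hmax⟩
  simp only [abs_of_nonneg (sum_col_nonneg hP _)]
  exact le_antisymm (ciSup_le hmax)
    (le_ciSup (f := fun i => ∑ j, P j i) (Finite.bddAbove_range _) i₀)

theorem updateCol_zero_mem (hp₀ : ∀ j, 0 ≤ p₀ j) (i : Fin n) :
    updateCol (0 : Matrix (Fin m) (Fin n) ℝ) i p₀ ∈ feasibleSet p₀ := by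
  refine ⟨fun j k => ?_, fun j => by simp [updateCol_apply]⟩
  rw [updateCol_apply]
  split_ifs
  exacts [hp₀ j, le_rfl]

end feasibleSet

theorem stmt_12_general (m n : ℕ) (hn : 1 ≤ n)
    (p₀ : Fin m → ℝ) (hp₀ : ∀ j, 0 ≤ p₀ j) (hsum : ∑ j, p₀ j = 1)
    (C : Matrix (Fin m) (Fin n) ℝ) (lam : ℝ) (hlam : 0 < lam) :
    sInf {v : ℝ | ∃ P ∈ feasibleSet (n := n) p₀,
        v = Matrix.trace (Cᵀ * P) + lam / (⨆ i : Fin n, |∑ j, P j i|)}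
      = ⨅ i : Fin n, sInf {v : ℝ | ∃ P ∈ feasibleSet (n := n) p₀,
          0 < (∑ j, P j i) ∧ v = Matrix.trace (Cᵀ * P) + lam / (∑ j, P j i)} := by
  have : Nonempty (Fin n) := ⟨⟨0, hn⟩⟩
  apply csInf_eq_iInf_csInf_of_forall_exists_le
  · refine ⟨-∑ i, ∑ j, |C j i|, ?_⟩
    rintro _ ⟨P, hP, rfl⟩
    have : 0 ≤ lam / ⨆ i, |∑ j, P j i| :=
      div_nonneg hlam.le (Real.iSup_nonneg fun _ => abs_nonneg _)
    linarith [feasibleSet.neg_sum_abs_le_trace hP hsum C]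
  · intro i
    exact ⟨_, _, feasibleSet.updateCol_zero_mem hp₀ i, by simp [hsum], rfl⟩
  · rintro i _ ⟨P, hP, hpos, rfl⟩
    obtain ⟨i₀, -, hsup, hmax⟩ := feasibleSet.exists_iSup_abs_sum_col_eq hP hsum
    refine ⟨_, ⟨P, hP, rfl⟩, ?_⟩
    rw [hsup]
    exact add_le_add_right (div_le_div_of_nonneg_left hlam.le hpos (hmax i)) _
  · rintro _ ⟨P, hP, rfl⟩
    obtain ⟨i₀, hpos, hsup, -⟩ := feasibleSet.exists_iSup_abs_sum_col_eq hP hsum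
    exact ⟨i₀, P, hP, hpos, by rw [hsup]⟩

theorem stmt_12 (m n : ℕ) (hm : 1 ≤ m) (hn : 1 ≤ n)
    (p₀ : Fin m → ℝ) (hp₀ : ∀ j, 0 ≤ p₀ j) (hsum : ∑ j, p₀ j = 1)
    (C : Matrix (Fin m) (Fin n) ℝ) (lam : ℝ) (hlam : 0 < lam) :
    sInf {v : ℝ | ∃ P ∈ feasibleSet (n := n) p₀,
        v = Matrix.trace (Cᵀ * P) + lam / (⨆ i : Fin n, |∑ j, P j i|)}
      = ⨅ i : Fin n, sInf {v : ℝ | ∃ P ∈ feasibleSet (n := n) p₀,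
          0 < (∑ j, P j i) ∧ v = Matrix.trace (Cᵀ * P) + lam / (∑ j, P j i)} :=
  stmt_12_general m n hn p₀ hp₀ hsum C lam hlam
end
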